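/- Let $G$ be a finite digraph and $f : V \to \mathbb{R}^\times$ non-vanishing. Representing homology classes by harmonic chains, the $(f,f)$-weighted path homology of $G$ (using the $f$-twisted boundary operators $\partial_n^f$ and the inner products $\iota_f$) is isometrically isomorphic in each degree to the usual path homology $H_n(G)$ equipped with the standard inner product on harmonic chains. -/

import Mathlib

open LinearMap Submodule

/-- The `f`-weighted boundary operator `∂ₙ₊₁^f` on `Λₙ₊₁(V)`. -/
noncomputable def pathBoundary (V : Type) (f : V → ℝ) (n : ℕ) :
    ((Fin (n + 2) → V) →₀ ℝ) →ₗ[ℝ] ((Fin (n + 1) → V) →₀ ℝ) :=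
  Finsupp.lsum ℝ fun p => LinearMap.toSpanSingleton ℝ _
    (∑ i : Fin (n + 2), ((-1 : ℝ) ^ (i : ℕ) * f (p i)) •
      Finsupp.single (p ∘ i.succAbove) 1)

/-- Projection of `Λₙ(V)` onto the span of regular elementary paths (killing
irregular elementary paths); it realizes `𝓡ₙ(V)` inside `Λₙ(V)`. -/
noncomputable def regProj (V : Type) [DecidableEq V] (n : ℕ) :
    ((Fin (n + 1) → V) →₀ ℝ) →ₗ[ℝ] ((Fin (n + 1) → V) →₀ ℝ) :=
  Finsupp.lsum ℝ fun p => LinearMap.toSpanSingleton ℝ _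
    (if ∃ i : Fin n, p i.castSucc = p i.succ then 0 else Finsupp.single p 1)

/-- The `f`-weighted regular boundary `∂ₙ^f : 𝓡ₙ(V) → 𝓡ₙ₋₁(V)` (realized on
spans of regular paths, with `∂₀ = 0`). -/
noncomputable def regBoundary (V : Type) [DecidableEq V] (f : V → ℝ) :
    ∀ n, ((Fin (n + 1) → V) →₀ ℝ) →ₗ[ℝ] ((Fin (n - 1 + 1) → V) →₀ ℝ)
  | 0 => 0
  | (n + 1) => (regProj V n).comp (pathBoundary V f n)

/-- The span `𝓐ₙ(G)` of allowed elementary paths of the digraph `G = (V, E)`. -/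
noncomputable def AllowedL (V : Type) (E : V → V → Prop) (n : ℕ) :
    Submodule ℝ ((Fin (n + 1) → V) →₀ ℝ) :=
  Submodule.span ℝ {x | ∃ p : Fin (n + 1) → V,
    (∀ i : Fin n, E (p i.castSucc) (p i.succ)) ∧ x = Finsupp.single p 1}

/-- The `f`-weighted `∂`-invariant space `Ωₙ^f(G) = 𝓐ₙ(G) ∩ (∂ₙ^f)⁻¹(𝓐ₙ₋₁(G))`. -/
noncomputable def OmegaL (V : Type) [DecidableEq V] (E : V → V → Prop)
    (f : V → ℝ) : ∀ n, Submodule ℝ ((Fin (n + 1) → V) →₀ ℝ)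
  | 0 => AllowedL V E 0
  | (n + 1) => AllowedL V E (n + 1) ⊓
      Submodule.comap (regBoundary V f (n + 1)) (AllowedL V E n)

/-- The `g`-weighted inner product `ι_g` on `Λₙ(V)`. -/
noncomputable def pathInner (V : Type) [DecidableEq V] (g : V → ℝ) (n : ℕ) :
    ((Fin (n + 1) → V) →₀ ℝ) →ₗ[ℝ] ((Fin (n + 1) → V) →₀ ℝ) →ₗ[ℝ] ℝ :=
  Finsupp.lsum ℝ fun p => LinearMap.toSpanSingleton ℝ _
    (Finsupp.lsum ℝ fun q => LinearMap.toSpanSingleton ℝ ℝ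
      (∏ i, (g (p i) * g (q i) * (if p i = q i then 1 else 0))))

/-- The space of harmonic `n`-chains of the `(f,g)`-weighted complex
`Ω^{f,g}_*(G)`: elements `ω ∈ Ωₙ` with `∂ₙ^f ω = 0` that are `ι_g`-orthogonal
to `∂ₙ₊₁^f(Ωₙ₊₁)`; this is `Ker ∂ₙ^f ∩ Ker (∂ₙ₊₁^f)*`, i.e. `Ker Δₙ^{f,g}`. -/
noncomputable def Harm (V : Type) [DecidableEq V] (E : V → V → Prop)
    (f g : V → ℝ) (n : ℕ) : Submodule ℝ ((Fin (n + 1) → V) →₀ ℝ) :=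
  OmegaL V E f n ⊓ LinearMap.ker (regBoundary V f n) ⊓
    ⨅ η : OmegaL V E f (n + 1),
      LinearMap.ker (pathInner V g n (regBoundary V f (n + 1) (η : _)))

/-!
The chain map `p ↦ (∏ᵢ h(pᵢ)) p` intertwines the `(h * g)`-weighted boundary with the
`g`-weighted one: deleting the vertex `pᵢ` multiplies the weight `∏ h` by `h(pᵢ)`, and this is
exactly the extra factor of `∂^{h g}`. It preserves allowed and regular paths, and it carries
`ι_{g h}` to `ι_g`. For `h = f` and `g = 1` it is therefore an isometric isomorphism from the
`(f, f)`-harmonic chains onto the ordinary ones.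
-/

noncomputable def pathScale (V : Type) (h : V → ℝ) (n : ℕ) :
    ((Fin (n + 1) → V) →₀ ℝ) →ₗ[ℝ] ((Fin (n + 1) → V) →₀ ℝ) :=
  Finsupp.lsum ℝ fun p => LinearMap.toSpanSingleton ℝ _ ((∏ i, h (p i)) • Finsupp.single p 1)

section PathScale

variable {V : Type}

lemma inv_mul_cancel_left_of_forall_ne_zero {h : V → ℝ} (hh : ∀ v, h v ≠ 0) (g : V → ℝ) :
    h⁻¹ * (h * g) = g :=
  funext fun v => inv_mul_cancel_left₀ (hh v) (g v)

lemma pathScale_single (h : V → ℝ) {n : ℕ} (p : Fin (n + 1) → V) :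
    pathScale V h n (Finsupp.single p 1) = (∏ i, h (p i)) • Finsupp.single p 1 := by
  simp [pathScale]

lemma pathBoundary_single (f : V → ℝ) {n : ℕ} (p : Fin (n + 2) → V) :
    pathBoundary V f n (Finsupp.single p 1) =
      ∑ i : Fin (n + 2), ((-1 : ℝ) ^ (i : ℕ) * f (p i)) • Finsupp.single (p ∘ i.succAbove) 1 := by
  simp [pathBoundary]

lemma regProj_single [DecidableEq V] {n : ℕ} (p : Fin (n + 1) → V) :
    regProj V n (Finsupp.single p 1) =
      if ∃ i : Fin n, p i.castSucc = p i.succ then 0 else Finsupp.single p 1 := by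
  simp [regProj]

lemma pathInner_single [DecidableEq V] (g : V → ℝ) {n : ℕ} (p q : Fin (n + 1) → V) :
    pathInner V g n (Finsupp.single p 1) (Finsupp.single q 1) =
      ∏ i, (g (p i) * g (q i) * (if p i = q i then 1 else 0)) := by
  simp [pathInner]

lemma pathScale_comp_pathBoundary (h g : V → ℝ) (n : ℕ) :
    (pathScale V h n).comp (pathBoundary V (h * g) n) =
      (pathBoundary V g n).comp (pathScale V h (n + 1)) := by
  refine Finsupp.lhom_ext' fun p => LinearMap.ext_ring ?_
  simp only [LinearMap.comp_apply, Finsupp.lsingle_apply, pathBoundary_single, pathScale_single,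
    map_sum, map_smul, smul_smul, Finset.smul_sum]
  refine Finset.sum_congr rfl fun i _ => ?_
  rw [Fin.prod_univ_succAbove (fun k => h (p k)) i, Pi.mul_apply]
  simp only [Function.comp_apply]
  ring_nf

lemma pathScale_comp_regProj [DecidableEq V] (h : V → ℝ) (n : ℕ) :
    (pathScale V h n).comp (regProj V n) = (regProj V n).comp (pathScale V h n) := by
  refine Finsupp.lhom_ext' fun p => LinearMap.ext_ring ?_
  simp only [LinearMap.comp_apply, Finsupp.lsingle_apply, regProj_single, pathScale_single,
    map_smul]
  split_ifs <;> simp [pathScale_single, *]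

lemma pathScale_regBoundary [DecidableEq V] (h g : V → ℝ) (n : ℕ)
    (x : (Fin (n + 1) → V) →₀ ℝ) :
    pathScale V h (n - 1) (regBoundary V (h * g) n x) = regBoundary V g n (pathScale V h n x) := by
  cases n with
  | zero => simp [regBoundary]
  | succ m =>
    change ((pathScale V h m).comp ((regProj V m).comp (pathBoundary V (h * g) m))) x =
      ((regProj V m).comp (pathBoundary V g m)).comp (pathScale V h (m + 1)) x
    rw [← LinearMap.comp_assoc, pathScale_comp_regProj, LinearMap.comp_assoc,
      pathScale_comp_pathBoundary, LinearMap.comp_assoc]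

lemma pathScale_pathScale (h h' : V → ℝ) (n : ℕ) (x : (Fin (n + 1) → V) →₀ ℝ) :
    pathScale V h n (pathScale V h' n x) = pathScale V (h * h') n x := by
  suffices (pathScale V h n).comp (pathScale V h' n) = pathScale V (h * h') n from
    LinearMap.congr_fun this x
  refine Finsupp.lhom_ext' fun p => LinearMap.ext_ring ?_
  simp only [LinearMap.comp_apply, Finsupp.lsingle_apply, pathScale_single, map_smul, smul_smul,
    Pi.mul_apply, Finset.prod_mul_distrib]
  ring_nf

lemma pathScale_one (n : ℕ) : pathScale V 1 n = LinearMap.id := by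
  refine Finsupp.lhom_ext' fun p => LinearMap.ext_ring ?_
  simp [pathScale_single]

lemma pathScale_inv_pathScale {h : V → ℝ} (hh : ∀ v, h v ≠ 0) (n : ℕ)
    (x : (Fin (n + 1) → V) →₀ ℝ) : pathScale V h⁻¹ n (pathScale V h n x) = x := by
  rw [pathScale_pathScale, show h⁻¹ * h = 1 from funext fun v => inv_mul_cancel₀ (hh v),
    pathScale_one, LinearMap.id_apply]

lemma pathScale_pathScale_inv {h : V → ℝ} (hh : ∀ v, h v ≠ 0) (n : ℕ)
    (x : (Fin (n + 1) → V) →₀ ℝ) : pathScale V h n (pathScale V h⁻¹ n x) = x := by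
  simpa using pathScale_inv_pathScale (h := h⁻¹) (by simpa using hh) n x

noncomputable def pathScaleEquiv {h : V → ℝ} (hh : ∀ v, h v ≠ 0) (n : ℕ) :
    ((Fin (n + 1) → V) →₀ ℝ) ≃ₗ[ℝ] ((Fin (n + 1) → V) →₀ ℝ) :=
  LinearEquiv.ofLinearMap (pathScale V h n) (pathScale V h⁻¹ n)
    (LinearMap.ext (pathScale_pathScale_inv hh n)) (LinearMap.ext (pathScale_inv_pathScale hh n))

lemma pathScaleEquiv_apply {h : V → ℝ} (hh : ∀ v, h v ≠ 0) (n : ℕ)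
    (x : (Fin (n + 1) → V) →₀ ℝ) : pathScaleEquiv hh n x = pathScale V h n x :=
  rfl

lemma pathInner_pathScale [DecidableEq V] (g h : V → ℝ) (n : ℕ) (a b : (Fin (n + 1) → V) →₀ ℝ) :
    pathInner V g n (pathScale V h n a) (pathScale V h n b) = pathInner V (g * h) n a b := by
  suffices (pathInner V g n).compl₁₂ (pathScale V h n) (pathScale V h n) = pathInner V (g * h) n from
    LinearMap.congr_fun₂ this a b
  refine Finsupp.lhom_ext' fun p => LinearMap.ext_ring <| Finsupp.lhom_ext' fun q =>
    LinearMap.ext_ring ?_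
  simp only [LinearMap.compl₁₂_apply, LinearMap.comp_apply, Finsupp.lsingle_apply,
    pathScale_single, map_smul, LinearMap.smul_apply, smul_eq_mul, pathInner_single,
    Pi.mul_apply]
  rw [← Finset.prod_mul_distrib, ← Finset.prod_mul_distrib]
  exact Finset.prod_congr rfl fun i _ => by ring

lemma pathScale_mem_allowedL (E : V → V → Prop) (h : V → ℝ) {n : ℕ} {x : (Fin (n + 1) → V) →₀ ℝ}
    (hx : x ∈ AllowedL V E n) : pathScale V h n x ∈ AllowedL V E n := by
  refine (Submodule.map_span_le _ _ _).2 ?_ (Submodule.mem_map_of_mem hx)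
  rintro _ ⟨p, hp, rfl⟩
  rw [pathScale_single]
  exact Submodule.smul_mem _ _ (Submodule.subset_span ⟨p, hp, rfl⟩)

end PathScale

section Harmonic

variable {V : Type} [DecidableEq V] (E : V → V → Prop)

lemma pathScale_mem_omegaL (h g : V → ℝ) {n : ℕ} {x : (Fin (n + 1) → V) →₀ ℝ}
    (hx : x ∈ OmegaL V E (h * g) n) : pathScale V h n x ∈ OmegaL V E g n := by
  cases n with
  | zero => exact pathScale_mem_allowedL E h hx
  | succ m =>
    refine ⟨pathScale_mem_allowedL E h hx.1, ?_⟩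
    change regBoundary V g (m + 1) (pathScale V h (m + 1) x) ∈ AllowedL V E m
    rw [← pathScale_regBoundary]
    exact pathScale_mem_allowedL E h hx.2

lemma mem_harm_iff {f g : V → ℝ} {n : ℕ} {x : (Fin (n + 1) → V) →₀ ℝ} :
    x ∈ Harm V E f g n ↔ x ∈ OmegaL V E f n ∧ regBoundary V f n x = 0 ∧
      ∀ η ∈ OmegaL V E f (n + 1), pathInner V g n (regBoundary V f (n + 1) η) x = 0 := by
  simp [Harm, Submodule.mem_iInf, and_assoc]

lemma pathScale_mem_harm {h : V → ℝ} (hh : ∀ v, h v ≠ 0) (g : V → ℝ) {n : ℕ}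
    {x : (Fin (n + 1) → V) →₀ ℝ} (hx : x ∈ Harm V E (h * g) (h * g) n) :
    pathScale V h n x ∈ Harm V E g g n := by
  obtain ⟨hΩ, hcycle, horth⟩ := (mem_harm_iff E).1 hx
  refine (mem_harm_iff E).2 ⟨pathScale_mem_omegaL E h g hΩ, ?_, fun η hη => ?_⟩
  · rw [← pathScale_regBoundary, hcycle, map_zero]
  -- Rescaling `η` by `h⁻¹` gives an `(h * g)`-invariant chain whose `∂^{h g}` rescales to `∂^g η`.
  have hη' : pathScale V h⁻¹ (n + 1) η ∈ OmegaL V E (h * g) (n + 1) := by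
    refine pathScale_mem_omegaL E h⁻¹ (h * g) ?_
    rwa [inv_mul_cancel_left_of_forall_ne_zero hh]
  have hbd : regBoundary V g (n + 1) η =
      pathScale V h n (regBoundary V (h * g) (n + 1) (pathScale V h⁻¹ (n + 1) η)) := by
    have := pathScale_regBoundary h g (n + 1) (pathScale V h⁻¹ (n + 1) η)
    rw [pathScale_pathScale_inv hh] at this
    exact this.symm
  rw [hbd, pathInner_pathScale, mul_comm g]
  exact horth _ hη'

lemma map_pathScaleEquiv_harm {h : V → ℝ} (hh : ∀ v, h v ≠ 0) (g : V → ℝ) (n : ℕ) :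
    (Harm V E (h * g) (h * g) n).map (pathScaleEquiv hh n : _ →ₗ[ℝ] _) = Harm V E g g n := by
  refine le_antisymm (Submodule.map_le_iff_le_comap.2 fun x hx => pathScale_mem_harm E hh g hx)
    fun x hx => ⟨(pathScaleEquiv hh n).symm x, ?_, LinearEquiv.apply_symm_apply _ x⟩
  have hinv : ∀ v, h⁻¹ v ≠ 0 := by simpa using hh
  refine pathScale_mem_harm E hinv (h * g) ?_
  rwa [inv_mul_cancel_left_of_forall_ne_zero hh]

end Harmonic

theorem stmt12_general (V : Type) [DecidableEq V] (E : V → V → Prop)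
    (f : V → ℝ) (hf : ∀ v, f v ≠ 0) (n : ℕ) :
    ∃ e : Harm V E f f n ≃ₗ[ℝ] Harm V E (fun _ => 1) (fun _ => 1) n,
      ∀ a b : Harm V E f f n,
        pathInner V (fun _ => 1) n (e a : _) (e b : _)
          = pathInner V f n (a : _) (b : _) := by
  have hmap : (Harm V E f f n).map (pathScaleEquiv hf n : _ →ₗ[ℝ] _) = Harm V E 1 1 n := by
    simpa using map_pathScaleEquiv_harm E hf 1 n
  refine ⟨(pathScaleEquiv hf n).ofSubmodules _ _ hmap, fun a b => ?_⟩
  rw [LinearEquiv.ofSubmodules_apply, LinearEquiv.ofSubmodules_apply, pathScaleEquiv_apply,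
    pathScaleEquiv_apply, pathInner_pathScale, ← Pi.one_def, one_mul]

/-- representing homology classes by harmonic chains, the
`(f,f)`-weighted path homology of a digraph `G` is, in each degree,
isometrically isomorphic to the usual (unweighted) path homology of `G` with
the standard inner product on harmonic chains. -/
theorem stmt12 (V : Type) [Fintype V] [DecidableEq V] (E : V → V → Prop)
    (hE : ∀ u v, E u v → u ≠ v) (f : V → ℝ) (hf : ∀ v, f v ≠ 0) (n : ℕ) :
    ∃ e : Harm V E f f n ≃ₗ[ℝ] Harm V E (fun _ => 1) (fun _ => 1) n,
      ∀ a b : Harm V E f f n,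
        pathInner V (fun _ => 1) n (e a : _) (e b : _)
          = pathInner V f n (a : _) (b : _) :=
  stmt12_general V E f hf n
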